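/- The word-equation AFT construction is correct: for the (n+1)-track AFT R with states q₀,…,q_n, initial formula q₀, final formula requiring exactly the run to end having passed through all q_i (accepting in q_n), and transitions Δ(q_{i−1}) = (q_{i−1} ∨ q_i) ∧ ⋀_{j∈[n]\{i}} e^j ∧ ⋀_v (v^i ↔ v^0) for i ∈ [n] and Δ(q_n) = false, the relation recognised by R is exactly {(x, x₁, …, x_n) : x = x₁ ∘ x₂ ∘ ⋯ ∘ x_n}, i.e., R encodes the word equation x = x₁∘⋯∘x_n. -/

import Mathlib

/-- Boolean formulae over variables of type `α`. -/
inductive BF (α : Type) : Type where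
  | var : α → BF α
  | tru : BF α
  | fls : BF α
  | and : BF α → BF α → BF α
  | or  : BF α → BF α → BF α
  | not : BF α → BF α

namespace BF

variable {α β : Type}

/-- Evaluation of a Boolean formula under an assignment. -/
def eval (A : α → Bool) : BF α → Bool
  | var v => A v
  | tru => true
  | fls => false
  | and f g => f.eval A && g.eval A
  | or f g => f.eval A || g.eval A
  | not f => ! f.eval A

/-- `PolarOn P b φ` holds iff every occurrence of a variable satisfying `P`
is under an even number of negations when `b = true`, resp. an odd number
of negations when `b = false`. -/
def PolarOn (P : α → Prop) : Bool → BF α → Prop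
  | b, var v => P v → b = true
  | _, tru => True
  | _, fls => True
  | b, and f g => PolarOn P b f ∧ PolarOn P b g
  | b, or f g => PolarOn P b f ∧ PolarOn P b g
  | b, not f => PolarOn P (!b) f

/-- A formula is positive if every variable occurs under an even number of negations. -/
def Positive (φ : BF α) : Prop := PolarOn (fun _ => True) true φ

/-- A formula is negative if every variable occurs under an odd number of negations. -/
def Negative (φ : BF α) : Prop := PolarOn (fun _ => True) false φ

/-- Renaming of variables. -/
def map (f : α → β) : BF α → BF β
  | var v => var (f v)
  | tru => tru
  | fls => fls
  | and g h => and (g.map f) (h.map f)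
  | or g h => or (g.map f) (h.map f)
  | not g => not (g.map f)

/-- The set of variables occurring in a formula. -/
def varSet : BF α → Set α
  | var v => {v}
  | tru => ∅
  | fls => ∅
  | and f g => f.varSet ∪ g.varSet
  | or f g => f.varSet ∪ g.varSet
  | not f => f.varSet

/-- Finite conjunction. -/
def bigAnd (l : List (BF α)) : BF α := l.foldr and tru

/-- Finite disjunction. -/
def bigOr (l : List (BF α)) : BF α := l.foldr or fls

/-- Biconditional. -/
def iff (f g : BF α) : BF α := (f.and g).or (f.not.and g.not)

end BF

/-- A succinct alternating finite automaton over input bit variables `ι` and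
states `Q`: the transition function assigns to each state a Boolean formula
over input variables and states, and there are an initial and a final formula
over states. -/
structure AFA (ι Q : Type) where
  delta : Q → BF (ι ⊕ Q)
  init : BF Q
  final : BF Q

namespace AFA

variable {ι Q Q' : Type}

/-- Well-formedness of a succinct AFA: transition formulae are positive on
states, the initial formula is positive, and the final formula is negative. -/
def WF (M : AFA ι Q) : Prop :=
  (∀ q, BF.PolarOn (fun x => ∃ p, x = Sum.inr p) true (M.delta q)) ∧
    M.init.Positive ∧ M.final.Negative

/-- One step of a run: every state active in `α` has its transition formula
satisfied by the input letter `b` together with the successor configuration `α'`. -/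
def Step (M : AFA ι Q) (α : Q → Bool) (b : ι → Bool) (α' : Q → Bool) : Prop :=
  ∀ q, α q = true → (M.delta q).eval (Sum.elim b α') = true

/-- A run of the AFA over the word `w`, given by its sequence of configurations. -/
def IsRun (M : AFA ι Q) (w : List (ι → Bool)) (αs : Fin (w.length + 1) → Q → Bool) : Prop :=
  ∀ i : Fin w.length, M.Step (αs i.castSucc) (w.get i) (αs i.succ)

/-- Acceptance: there is a run whose first configuration satisfies the initial
formula and whose last configuration satisfies the final formula. -/
def Accepts (M : AFA ι Q) (w : List (ι → Bool)) : Prop :=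
  ∃ αs : Fin (w.length + 1) → Q → Bool,
    M.IsRun w αs ∧ M.init.eval (αs 0) = true ∧
      M.final.eval (αs (Fin.last w.length)) = true

/-- The language of an AFA. -/
def Lang (M : AFA ι Q) : Set (List (ι → Bool)) := {w | M.Accepts w}

/-- Product (intersection) construction on AFAs with disjoint state sets. -/
def inter (M : AFA ι Q) (M' : AFA ι Q') : AFA ι (Q ⊕ Q') where
  delta := fun q => match q with
    | .inl q => (M.delta q).map (Sum.map id Sum.inl)
    | .inr q => (M'.delta q).map (Sum.map id Sum.inr)
  init := (M.init.map Sum.inl).and (M'.init.map Sum.inr)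
  final := (M.final.map Sum.inl).and (M'.final.map Sum.inr)

/-- Union construction on AFAs with disjoint state sets. -/
def union (M : AFA ι Q) (M' : AFA ι Q') : AFA ι (Q ⊕ Q') where
  delta := fun q => match q with
    | .inl q => (M.delta q).map (Sum.map id Sum.inl)
    | .inr q => (M'.delta q).map (Sum.map id Sum.inr)
  init := (M.init.map Sum.inl).or (M'.init.map Sum.inr)
  final := (M.final.map Sum.inl).and (M'.final.map Sum.inr)

end AFA
/-- A `k`-track letter over value bit variables `V` and epsilon bit variables `E`
is an assignment to the indexed bit variables `(V ⊕ E) × Fin k`.  The word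
carried by track `i` is obtained by erasing all positions in which some epsilon
bit of track `i` is set, and restricting the remaining letters to the value
bits of track `i`. -/
def trackWord {V E : Type} [Fintype E] {k : ℕ}
    (w : List ((V ⊕ E) × Fin k → Bool)) (i : Fin k) : List (V → Bool) :=
  (w.filter fun b => ! decide (∃ e : E, b (Sum.inr e, i) = true)).map
    fun b v => b (Sum.inl v, i)

/-- A `k`-track AFT `M` (an AFA over `(V ⊕ E) × Fin k`) recognises the tuple of
words `t` iff it accepts some word whose track projections are exactly `t`. -/
def AFA.RelAccepts {V E : Type} [Fintype E] {k : ℕ} {Q : Type}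
    (M : AFA ((V ⊕ E) × Fin k) Q) (t : Fin k → List (V → Bool)) : Prop :=
  ∃ w, M.Accepts w ∧ ∀ i, trackWord w i = t i

/-- A succinct alternating automaton/transducer with synchronisation parameters
`P`: the initial and final formulae may mention parameters (positively and
negatively) besides states. -/
structure PAFA (ι P Q : Type) where
  delta : Q → BF (ι ⊕ Q)
  init : BF (P ⊕ Q)
  final : BF (P ⊕ Q)

namespace PAFA

variable {ι P Q : Type}

/-- Well-formedness: transitions positive on states, the initial formula
positive on states, the final formula negative on states (parameters may occur
with both polarities). -/
def WF (M : PAFA ι P Q) : Prop :=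
  (∀ q, BF.PolarOn (fun x => ∃ p, x = Sum.inr p) true (M.delta q)) ∧
    BF.PolarOn (fun x => ∃ q, x = Sum.inr q) true M.init ∧
    BF.PolarOn (fun x => ∃ q, x = Sum.inr q) false M.final

/-- Acceptance of a word with a given parameter assignment `π`. -/
def AcceptsWith (M : PAFA ι P Q) (π : P → Bool) (w : List (ι → Bool)) : Prop :=
  ∃ αs : Fin (w.length + 1) → Q → Bool,
    (∀ i : Fin w.length, ∀ q, αs i.castSucc q = true →
        (M.delta q).eval (Sum.elim (w.get i) (αs i.succ)) = true) ∧
    M.init.eval (Sum.elim π (αs 0)) = true ∧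
    M.final.eval (Sum.elim π (αs (Fin.last w.length))) = true

/-- A `k`-track AFT with parameters recognises the tuple `t` with parameter
assignment `π` iff it accepts with `π` some word whose track projections are `t`. -/
def RelAcceptsWith {V E : Type} [Fintype E] {k : ℕ}
    (M : PAFA ((V ⊕ E) × Fin k) P Q) (π : P → Bool)
    (t : Fin k → List (V → Bool)) : Prop :=
  ∃ w, M.AcceptsWith π w ∧ ∀ i, trackWord w i = t i

end PAFA

/-- All bit variables of a track: the `nv` value bits and the epsilon bit. -/
def allBits (nv : ℕ) : List (Fin nv ⊕ Fin 1) :=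
  ((List.finRange nv).map Sum.inl) ++ [Sum.inr 0]

/-- The `(n+1)`-track AFT for the word equation `x = x₁ ∘ ⋯ ∘ x_n`: states
`q₀,…,q_n`, initial formula `q₀`, final formula accepting in `q_n`, and
transitions `Δ(q_{i−1}) = (q_{i−1} ∨ q_i) ∧ ⋀_{j∈[n]\{i}} e^j ∧ ⋀_v (v^i ↔ v^0)`
(copy the symbol of track 0 to track `i` while all other tracks read epsilon),
and `Δ(q_n) = false`. -/
def weqAFT (nv n : ℕ) : AFA ((Fin nv ⊕ Fin 1) × Fin (n + 1)) (Fin (n + 1)) where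
  delta := fun s =>
    if h : (s : ℕ) < n then
      let t : Fin (n + 1) := ⟨(s : ℕ) + 1, by omega⟩
      ((BF.var (Sum.inr s)).or (BF.var (Sum.inr t))).and
        ((BF.bigAnd (((List.finRange (n + 1)).filter
              (fun j => decide (j ≠ 0 ∧ j ≠ t))).map
            fun j => BF.var (Sum.inl (Sum.inr 0, j)))).and
          (BF.bigAnd ((allBits nv).map fun v =>
            (BF.var (Sum.inl (v, t))).iff (BF.var (Sum.inl (v, 0))))))
    else BF.fls
  init := BF.var 0
  final := BF.bigAnd (((List.finRange (n + 1)).filter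
      (fun j : Fin (n + 1) => decide ((j : ℕ) ≠ n))).map
    fun j => (BF.var j).not)

/-!
Each transition of `weqAFT` out of `q_{i-1}` reads either a letter that is `ε` on every track,
or a letter that appends one and the same symbol to tracks `0` and `i` while all other tracks read
`ε`. Along a run the index of the active state never decreases, so the symbols of track `0` are
distributed, in order, first over track `1`, then track `2`, and so on: track `0` is the
concatenation of tracks `1, …, n`. Conversely, `x₁ ∘ ⋯ ∘ x_n` is accepted by the run through
singleton configurations that stays in `q_{i-1}` while copying `x_i` and then moves to `q_i` on an
all-`ε` letter.
-/

namespace BF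

variable {α : Type}

theorem eval_bigAnd (l : List (BF α)) (A : α → Bool) :
    (bigAnd l).eval A = true ↔ ∀ f ∈ l, f.eval A = true := by
  induction l with
  | nil => simp [bigAnd, eval]
  | cons f l ih => simp [bigAnd, eval, ← ih]

theorem eval_iff (f g : BF α) (A : α → Bool) :
    (f.iff g).eval A = true ↔ f.eval A = g.eval A := by
  simp only [iff, eval]
  cases f.eval A <;> cases g.eval A <;> decide

end BF

namespace List

variable {γ : Type}

theorem flatten_ofFn_update_append :
    ∀ {m : ℕ} (f : Fin m → List γ) (k : Fin m) (l : List γ), (∀ i < k, f i = []) →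
      (ofFn (Function.update f k (l ++ f k))).flatten = l ++ (ofFn f).flatten
  | _ + 1, f, k, l, hf => by
    induction k using Fin.cases with
    | zero => simp [ofFn_succ]
    | succ k =>
      have hf0 : f 0 = [] := hf 0 (Fin.succ_pos k)
      have ih := flatten_ofFn_update_append (f ∘ Fin.succ) k l
        fun i hi => hf i.succ (Fin.succ_lt_succ_iff.mpr hi)
      rw [← Function.update_comp_eq_of_injective f (Fin.succ_injective _)] at ih
      rw [ofFn_succ, flatten_cons, Function.update_of_ne (Fin.succ_ne_zero k).symm, hf0,
        nil_append, ofFn_succ, flatten_cons, hf0, nil_append]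
      exact ih

theorem flatten_ofFn_eq_of_eq_nil {m : ℕ} (f : Fin m → List γ) (k : Fin m)
    (hf : ∀ i ≠ k, f i = []) : (ofFn f).flatten = f k := by
  have hupd : f = Function.update (fun _ => []) k (f k ++ []) := by
    ext1 i
    by_cases hi : i = k <;> simp [hi, hf]
  rw [hupd, flatten_ofFn_update_append _ k _ fun _ _ => rfl]
  simp

end List

section trackWord

variable {V E : Type} [Fintype E] {k : ℕ}

theorem trackWord_append (w₁ w₂ : List ((V ⊕ E) × Fin k → Bool)) (i : Fin k) :
    trackWord (w₁ ++ w₂) i = trackWord w₁ i ++ trackWord w₂ i := by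
  simp [trackWord]

theorem trackWord_flatten (ws : List (List ((V ⊕ E) × Fin k → Bool))) (i : Fin k) :
    trackWord ws.flatten i = (ws.map (trackWord · i)).flatten := by
  induction ws with
  | nil => rfl
  | cons w ws ih => simp [trackWord_append, ih]

end trackWord

namespace AFA

variable {ι Q : Type} {M : AFA ι Q}

theorem IsRun.head {b : ι → Bool} {w : List (ι → Bool)} {αs : Fin (w.length + 2) → Q → Bool}
    (h : M.IsRun (b :: w) αs) : M.Step (αs 0) b (αs 1) :=
  h 0

theorem IsRun.tail {b : ι → Bool} {w : List (ι → Bool)} {αs : Fin (w.length + 2) → Q → Bool}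
    (h : M.IsRun (b :: w) αs) : M.IsRun w (fun i => αs i.succ) :=
  fun i => h i.succ

theorem IsRun.cons {α : Q → Bool} {b : ι → Bool} {w : List (ι → Bool)}
    {αs : Fin (w.length + 1) → Q → Bool} (hb : M.Step α b (αs 0)) (h : M.IsRun w αs) :
    M.IsRun (b :: w) (Fin.cons α αs) := by
  intro i
  induction i using Fin.cases with
  | zero => exact hb
  | succ i => simpa [← Fin.succ_castSucc] using h i

variable [DecidableEq Q]

def singletonConfig (s : Q) : Q → Bool := fun q => decide (q = s)

inductive SingletonPath (M : AFA ι Q) : Q → List (ι → Bool) → Q → Prop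
  | nil (s : Q) : SingletonPath M s [] s
  | cons {s s' r : Q} {b : ι → Bool} {w : List (ι → Bool)} :
      (M.delta s).eval (Sum.elim b (singletonConfig s')) = true →
        SingletonPath M s' w r → SingletonPath M s (b :: w) r

theorem SingletonPath.append {s r u : Q} {w₁ w₂ : List (ι → Bool)}
    (h₁ : M.SingletonPath s w₁ r) (h₂ : M.SingletonPath r w₂ u) :
    M.SingletonPath s (w₁ ++ w₂) u := by
  induction h₁ with
  | nil => exact h₂
  | cons hb _ ih => exact .cons hb (ih h₂)

theorem SingletonPath.flatten_ofFn :
    ∀ {m : ℕ} (σ : Fin (m + 1) → Q) (g : Fin m → List (ι → Bool)),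
      (∀ i, M.SingletonPath (σ i.castSucc) (g i) (σ i.succ)) →
        M.SingletonPath (σ 0) (List.ofFn g).flatten (σ (Fin.last m))
  | 0, σ, _, _ => .nil (σ 0)
  | _ + 1, σ, g, hg => by
    rw [List.ofFn_succ, List.flatten_cons]
    exact (hg 0).append
      (flatten_ofFn (fun i => σ i.succ) (fun i => g i.succ) fun i => hg i.succ)

theorem SingletonPath.exists_run {s r : Q} {w : List (ι → Bool)} (h : M.SingletonPath s w r) :
    ∃ αs : Fin (w.length + 1) → Q → Bool,
      M.IsRun w αs ∧ αs 0 = singletonConfig s ∧ αs (Fin.last w.length) = singletonConfig r := by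
  induction h with
  | nil s => exact ⟨fun _ => singletonConfig s, fun i => i.elim0, rfl, rfl⟩
  | @cons s s' r b w hb _ ih =>
    obtain ⟨αs, hrun, h0, hlast⟩ := ih
    refine ⟨Fin.cons (singletonConfig s) αs, .cons ?_ hrun, rfl, by simpa using hlast⟩
    intro q hq
    obtain rfl : q = s := by simpa [singletonConfig] using hq
    rwa [h0]

end AFA

namespace WeqAFT

variable {nv n : ℕ}

abbrev Letter (nv n : ℕ) := (Fin nv ⊕ Fin 1) × Fin (n + 1) → Bool

theorem delta_castSucc_eval (i : Fin n)
    (A : (Fin nv ⊕ Fin 1) × Fin (n + 1) ⊕ Fin (n + 1) → Bool) :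
    ((weqAFT nv n).delta i.castSucc).eval A = true ↔
      (A (.inr i.castSucc) = true ∨ A (.inr i.succ) = true) ∧
        (∀ j, j ≠ 0 → j ≠ i.succ → A (.inl (.inr 0, j)) = true) ∧
        ∀ v, A (.inl (v, i.succ)) = A (.inl (v, 0)) := by
  have hbits : ∀ v, v ∈ allBits nv := by
    rintro (v | v) <;> simp [allBits, Fin.fin_one_eq_zero]
  have hlt : (i.castSucc : ℕ) < n := i.isLt
  have hsucc : (⟨(i.castSucc : ℕ) + 1, Nat.succ_lt_succ hlt⟩ : Fin (n + 1)) = i.succ := rfl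
  simp only [weqAFT, dif_pos hlt, hsucc, BF.eval, Bool.and_eq_true, Bool.or_eq_true,
    BF.eval_bigAnd, List.forall_mem_map, BF.eval_iff, List.mem_filter, List.mem_finRange,
    true_and, decide_eq_true_eq, and_imp, forall_const, hbits]

theorem delta_last_eval (A : (Fin nv ⊕ Fin 1) × Fin (n + 1) ⊕ Fin (n + 1) → Bool) :
    ((weqAFT nv n).delta (Fin.last n)).eval A = false := by
  simp [weqAFT, BF.eval]

theorem final_eval (α : Fin (n + 1) → Bool) :
    (weqAFT nv n).final.eval α = true ↔ ∀ j : Fin n, α j.castSucc = false := by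
  simp [weqAFT, BF.eval_bigAnd, BF.eval, Fin.forall_fin_succ', fun j : Fin n => j.isLt.ne]

theorem trackWord_succ_of_delta_eval {i : Fin n} {b : Letter nv n} {α' : Fin (n + 1) → Bool}
    (h : ((weqAFT nv n).delta i.castSucc).eval (Sum.elim b α') = true) (j : Fin n) :
    trackWord [b] j.succ = if j = i then trackWord [b] 0 else [] := by
  obtain ⟨-, heps, hcopy⟩ := (delta_castSucc_eval i _).1 h
  simp only [Sum.elim_inl] at heps hcopy
  split_ifs with hj
  · simp [trackWord, List.filter_cons, hj, hcopy]
  · simp [trackWord, heps j.succ (Fin.succ_ne_zero j) (by simpa using hj)]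

theorem trackWord_zero_eq_flatten_of_isRun : ∀ (w : List (Letter nv n))
    (αs : Fin (w.length + 1) → Fin (n + 1) → Bool), (weqAFT nv n).IsRun w αs →
    ∀ s, αs 0 s = true →
      trackWord w 0 = (List.ofFn fun i : Fin n => trackWord w i.succ).flatten ∧
        ∀ i : Fin n, i.castSucc < s → trackWord w i.succ = []
  | [], _, _, _, _ => ⟨by simp [trackWord], fun _ _ => rfl⟩
  | b :: w, αs, hrun, s, hs => by
    induction s using Fin.lastCases with
    | last =>
      have hδ := hrun.head _ hs
      rw [delta_last_eval] at hδ
      contradiction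
    | cast i =>
      have hδ := hrun.head _ hs
      obtain ⟨s', hs', hle⟩ : ∃ s', αs 1 s' = true ∧ i.castSucc ≤ s' :=
        ((delta_castSucc_eval i _).1 hδ).1.elim (fun h => ⟨_, h, le_rfl⟩)
          (fun h => ⟨_, h, Fin.castSucc_lt_succ.le⟩)
      obtain ⟨ih, ih_nil⟩ := trackWord_zero_eq_flatten_of_isRun w _ hrun.tail s' hs'
      have hupd : (fun j : Fin n => trackWord (b :: w) j.succ) =
          Function.update (fun j => trackWord w j.succ) i
            (trackWord [b] 0 ++ trackWord w i.succ) := by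
        ext1 j
        rw [← List.singleton_append, trackWord_append, trackWord_succ_of_delta_eval hδ]
        by_cases hj : j = i <;> simp [hj]
      refine ⟨?_, fun j hj => ?_⟩
      · rw [hupd, List.flatten_ofFn_update_append _ _ _
          fun j hj => ih_nil j ((Fin.castSucc_lt_castSucc_iff.2 hj).trans_le hle), ← ih,
          ← trackWord_append, List.singleton_append]
      · rw [congrFun hupd j, Function.update_of_ne (Fin.castSucc_lt_castSucc_iff.1 hj).ne]
        exact ih_nil j (hj.trans_le hle)

theorem eq_flatten_of_accepts {w : List (Letter nv n)} (h : (weqAFT nv n).Accepts w) :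
    trackWord w 0 = (List.ofFn fun i : Fin n => trackWord w i.succ).flatten := by
  obtain ⟨αs, hrun, hinit, -⟩ := h
  have hq₀ : αs 0 0 = true := by simpa [weqAFT, BF.eval] using hinit
  exact (trackWord_zero_eq_flatten_of_isRun w αs hrun 0 hq₀).1

def blockLetter (a : Fin nv → Bool) (i : Fin (n + 1)) : Letter nv n
  | (.inl v, _) => a v
  | (.inr _, j) => decide (j ≠ 0 ∧ j ≠ i)

-- The all-`ε` letter lets the run leave `q_{i-1}` for `q_i` even when `x_i` is empty.
def epsLetter : Letter nv n := fun x => x.1.isRight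

def blockWord (i : Fin n) (x : List (Fin nv → Bool)) : List (Letter nv n) :=
  x.map (blockLetter · i.succ) ++ [epsLetter]

theorem singletonPath_blockWord (i : Fin n) (x : List (Fin nv → Bool)) :
    (weqAFT nv n).SingletonPath i.castSucc (blockWord i x) i.succ := by
  induction x with
  | nil =>
    refine .cons ((delta_castSucc_eval i _).2 ⟨?_, ?_, ?_⟩) (.nil _)
    · simp [AFA.singletonConfig]
    · simp [epsLetter]
    · simp [epsLetter]
  | cons a x ih =>
    refine .cons ((delta_castSucc_eval i _).2 ⟨?_, ?_, ?_⟩) ih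
    · simp [AFA.singletonConfig]
    · intro j hj0 hji
      simp [blockLetter, hj0, hji]
    · rintro (v | v) <;> simp [blockLetter]

theorem trackWord_blockWord (i : Fin n) (x : List (Fin nv → Bool)) (j : Fin (n + 1)) :
    trackWord (blockWord i x) j = if j = 0 ∨ j = i.succ then x else [] := by
  induction x with
  | nil => simp [blockWord, trackWord, epsLetter]
  | cons a x ih =>
    have hcons : blockWord i (a :: x) = [blockLetter a i.succ] ++ blockWord i x := rfl
    rw [hcons, trackWord_append, ih]
    by_cases hj : j = 0 ∨ j = i.succ <;> simp [trackWord, blockLetter, hj]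

theorem accepts_flatten_blockWord (x : Fin n → List (Fin nv → Bool)) :
    (weqAFT nv n).Accepts (List.ofFn fun i => blockWord i (x i)).flatten := by
  obtain ⟨αs, hrun, h0, hlast⟩ := (AFA.SingletonPath.flatten_ofFn id _
    fun i => singletonPath_blockWord i (x i)).exists_run
  refine ⟨αs, hrun, by simp [h0, weqAFT, BF.eval, AFA.singletonConfig], ?_⟩
  rw [hlast, final_eval]
  simp [AFA.singletonConfig, Fin.castSucc_ne_last]

theorem trackWord_flatten_blockWord_zero (x : Fin n → List (Fin nv → Bool)) :
    trackWord (List.ofFn fun i => blockWord i (x i)).flatten 0 = (List.ofFn x).flatten := by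
  simp [trackWord_flatten, List.map_ofFn, Function.comp_def, trackWord_blockWord]

theorem trackWord_flatten_blockWord_succ (x : Fin n → List (Fin nv → Bool)) (j : Fin n) :
    trackWord (List.ofFn fun i => blockWord i (x i)).flatten j.succ = x j := by
  simp only [trackWord_flatten, List.map_ofFn, Function.comp_def, trackWord_blockWord]
  rw [List.flatten_ofFn_eq_of_eq_nil _ j fun i hi => by simp [Ne.symm hi]]
  simp

end WeqAFT

/-- the word-equation AFT construction is correct: the relation
recognised by `weqAFT nv n` consists exactly of the tuples `(x, x₁, …, x_n)`
with `x = x₁ ∘ x₂ ∘ ⋯ ∘ x_n` (track `0` carries `x` and track `i` carries `x_i`). -/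
theorem weq_aft_correct (nv n : ℕ) (t : Fin (n + 1) → List (Fin nv → Bool)) :
    (weqAFT nv n).RelAccepts t ↔
      t 0 = (List.ofFn fun i : Fin n => t i.succ).flatten := by
  constructor
  · rintro ⟨w, hw, htw⟩
    simpa only [htw] using WeqAFT.eq_flatten_of_accepts hw
  · intro ht
    refine ⟨_, WeqAFT.accepts_flatten_blockWord fun i => t i.succ, Fin.cases ?_ fun j => ?_⟩
    · rw [WeqAFT.trackWord_flatten_blockWord_zero, ht]
    · exact WeqAFT.trackWord_flatten_blockWord_succ _ j
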